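/- Let {X_𝔞}_{𝔞∈[𝔞₋,𝔞₊]} be a scale of Banach spaces, let F be an Ovsjannikov map of order q with 0 ≤ q < 1 and constant L > 0, fix T > 0 and x₀ ∈ X_{𝔞₋}, and let ℐ(f)(t) = x₀ + ∫₀ᵗ F(f(s)) ds. Then there exists a unique map φ lying in C([0,T], X_𝔞) for every 𝔞 ∈ (𝔞₋, 𝔞₊) such that ℐ(φ) = φ; moreover for every 𝔞 ∈ (𝔞₋, 𝔞₊) and every continuous f : [0,T] → X_{𝔞₋}, the iterates ℐⁿ(f) converge to φ in the supremum norm of C([0,T], X_𝔞) as n → ∞. -/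

import Mathlib

open MeasureTheory Set Filter ENNReal

noncomputable section

/-- `f : [0,T] → X_a` is continuous, where `X_a` is the subspace of the ambient Banach
space `E` on which the extended norm `N a` is finite, with the metric induced by `N a`. -/
def ScaleContOn {E : Type*} [NormedAddCommGroup E]
    (N : ℝ → E → ℝ≥0∞) (a T : ℝ) (f : ℝ → E) : Prop :=
  (∀ t ∈ Icc (0 : ℝ) T, N a (f t) ≠ ⊤) ∧
  ∀ t₀ ∈ Icc (0 : ℝ) T,
    Tendsto (fun t => N a (f t - f t₀)) (nhdsWithin t₀ (Icc (0 : ℝ) T)) (nhds 0)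

/-- The map `ℐ(f)(t) = x₀ + ∫₀ᵗ F(f(s)) ds` (Bochner integral in the ambient space). -/
def Imap {E : Type*} [NormedAddCommGroup E] [NormedSpace ℝ E] [CompleteSpace E]
    (F : E → E) (x₀ : E) (f : ℝ → E) : ℝ → E :=
  fun t => x₀ + ∫ s in (0 : ℝ)..t, F (f s)

/-!
Every level `X_a = {N a < ∞}` is a Banach space continuously embedded in `E`, so Bochner
integrals of `X_a`-continuous maps can be estimated in `X_a`. Climbing from level `a` to `a + δ`
costs the factor `L δ^{-q}` of the Lipschitz bound of `F`, while each integration over `[0, t]`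
gains a factor `t^k / k!`. Splitting a gap `d` into `n` steps of size `d / n` bounds the `n`-th
iterate of `ℐ` as a map from `C([0,T], X_a)` to `C([0,T], X_{a+d})` by `(L (n/d)^q T)^n / n!`,
which is summable because `n^n / n! ≤ eⁿ` and `q < 1`. Hence the Picard iterates of `x₀` are
Cauchy in every `C([0,T], X_a)` with `a > amin`; their limit is a fixed point, and the same bound
forces any other fixed point, and the iterates of any other initial map, onto it.
-/

open Topology

section CompleteENorm

variable {E : Type*} [NormedAddCommGroup E] [NormedSpace ℝ E]

structure IsCompleteENorm (ν : E → ℝ≥0∞) : Prop where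
  add_le : ∀ x y, ν (x + y) ≤ ν x + ν y
  smul_eq : ∀ (c : ℝ) x, ν (c • x) = ‖c‖₊ * ν x
  enorm_le : ∀ x, ‖x‖ₑ ≤ ν x
  complete : ∀ u : ℕ → E, (∀ n, ν (u n) ≠ ⊤) →
    (∀ ε : ℝ≥0∞, 0 < ε → ∃ K : ℕ, ∀ m ≥ K, ∀ n ≥ K, ν (u m - u n) < ε) →
    ∃ x, ν x ≠ ⊤ ∧ Tendsto (fun n => ν (u n - x)) atTop (𝓝 0)

namespace IsCompleteENorm

variable {ν : E → ℝ≥0∞} (hν : IsCompleteENorm ν)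
include hν

lemma map_zero : ν 0 = 0 := by
  simpa using hν.smul_eq 0 0

lemma map_neg (x : E) : ν (-x) = ν x := by
  simpa using hν.smul_eq (-1) x

lemma map_sub_rev (x y : E) : ν (x - y) = ν (y - x) := by
  rw [← neg_sub, hν.map_neg]

lemma sub_le (x y z : E) : ν (x - z) ≤ ν (x - y) + ν (y - z) := by
  simpa using hν.add_le (x - y) (y - z)

lemma add_ne_top {x y : E} (hx : ν x ≠ ⊤) (hy : ν y ≠ ⊤) : ν (x + y) ≠ ⊤ :=
  ne_top_of_le_ne_top (ENNReal.add_ne_top.2 ⟨hx, hy⟩) (hν.add_le x y)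

lemma eq_of_sub_eq_zero {x y : E} (h : ν (x - y) = 0) : x = y := by
  have := hν.enorm_le (x - y)
  rwa [h, nonpos_iff_eq_zero, enorm_eq_zero, sub_eq_zero] at this

def finiteSubmodule : Submodule ℝ E where
  carrier := {x | ν x ≠ ⊤}
  add_mem' := hν.add_ne_top
  zero_mem' := by simp [hν.map_zero]
  smul_mem' c x hx := by simpa [hν.smul_eq] using ENNReal.mul_ne_top coe_ne_top hx

/-- The Banach space `{x | ν x < ∞}` normed by `ν`: a type synonym of `finiteSubmodule`, so that
it does not inherit the norm of `E`. -/
def Space : Type _ := hν.finiteSubmodule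

instance : AddCommGroup hν.Space := inferInstanceAs (AddCommGroup hν.finiteSubmodule)

instance : Module ℝ hν.Space := inferInstanceAs (Module ℝ hν.finiteSubmodule)

def ofFinite (x : E) (hx : ν x ≠ ⊤) : hν.Space := (⟨x, hx⟩ : hν.finiteSubmodule)

def inclₗ : hν.Space →ₗ[ℝ] E := hν.finiteSubmodule.subtype

lemma inclₗ_injective : Function.Injective hν.inclₗ := Subtype.val_injective

lemma inclₗ_ne_top (x : hν.Space) : ν (hν.inclₗ x) ≠ ⊤ := (x : hν.finiteSubmodule).2

instance : Norm hν.Space := ⟨fun x => (ν (hν.inclₗ x)).toReal⟩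

lemma norm_def (x : hν.Space) : ‖x‖ = (ν (hν.inclₗ x)).toReal := rfl

lemma normedSpaceCore : NormedSpace.Core ℝ hν.Space where
  norm_nonneg _ := toReal_nonneg
  norm_smul c x := by simp [norm_def, hν.smul_eq, ENNReal.toReal_mul]
  norm_triangle x y := by
    simp only [norm_def, map_add]
    exact ENNReal.toReal_le_add (hν.add_le _ _) (hν.inclₗ_ne_top x) (hν.inclₗ_ne_top y)
  norm_eq_zero_iff x := by
    rw [norm_def, ENNReal.toReal_eq_zero_iff, or_iff_left (hν.inclₗ_ne_top x)]
    refine ⟨fun h => ?_, fun h => by simp [h, hν.map_zero]⟩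
    exact (injective_iff_map_eq_zero _).1 hν.inclₗ_injective x
      (hν.eq_of_sub_eq_zero (by simpa using h))

instance : NormedAddCommGroup hν.Space := .ofCore hν.normedSpaceCore

instance : NormedSpace ℝ hν.Space := .ofCore hν.normedSpaceCore

def incl : hν.Space →L[ℝ] E :=
  hν.inclₗ.mkContinuous 1 fun x => by
    rw [one_mul, ← toReal_enorm]
    exact ENNReal.toReal_mono (hν.inclₗ_ne_top x) (hν.enorm_le _)

@[simp]
lemma incl_ofFinite (x : E) (hx : ν x ≠ ⊤) : hν.incl (hν.ofFinite x hx) = x := rfl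

lemma ne_top (x : hν.Space) : ν (hν.incl x) ≠ ⊤ := hν.inclₗ_ne_top x

lemma edist_eq (x y : hν.Space) : edist x y = ν (hν.incl x - hν.incl y) := by
  rw [edist_dist, dist_eq_norm, norm_def, ofReal_toReal (hν.inclₗ_ne_top _), map_sub]
  rfl

lemma enorm_eq (x : hν.Space) : ‖x‖ₑ = ν (hν.incl x) := by
  rw [← edist_zero_right, hν.edist_eq, _root_.map_zero, sub_zero]

instance : CompleteSpace hν.Space := by
  refine EMetric.complete_of_cauchySeq_tendsto fun u hu => ?_
  obtain ⟨x, hx, hux⟩ := hν.complete (fun n => hν.incl (u n)) (fun n => hν.ne_top _)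
    fun ε hε => by simpa [hν.edist_eq] using EMetric.cauchySeq_iff.1 hu ε hε
  exact ⟨hν.ofFinite x hx, tendsto_iff_edist_tendsto_0.2 (by simpa [hν.edist_eq] using hux)⟩

end IsCompleteENorm

end CompleteENorm

section ScaleContOn

variable {E : Type*} [NormedAddCommGroup E] {ν : E → ℝ≥0∞}
  {N : ℝ → E → ℝ≥0∞} {a b T : ℝ} {f g h : ℝ → E}

def supEDist (ν : E → ℝ≥0∞) (T : ℝ) (f g : ℝ → E) : ℝ≥0∞ :=
  ⨆ t ∈ Icc (0 : ℝ) T, ν (f t - g t)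

lemma le_supEDist {t : ℝ} (ht : t ∈ Icc 0 T) : ν (f t - g t) ≤ supEDist ν T f g :=
  le_iSup₂ (f := fun t _ => ν (f t - g t)) t ht

lemma supEDist_mono {ν' : E → ℝ≥0∞} (hνν' : ∀ x, ν' x ≤ ν x) :
    supEDist ν' T f g ≤ supEDist ν T f g :=
  iSup₂_mono fun _ _ => hνν' _

lemma supEDist_congr {f' g' : ℝ → E} (hf : EqOn f f' (Icc 0 T)) (hg : EqOn g g' (Icc 0 T)) :
    supEDist ν T f g = supEDist ν T f' g' :=
  biSup_congr fun _ ht => by rw [hf ht, hg ht]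

namespace ScaleContOn

lemma congr (hf : ScaleContOn N a T f) (hfg : EqOn f g (Icc 0 T)) : ScaleContOn N a T g :=
  ⟨fun t ht => hfg ht ▸ hf.1 t ht, fun t₀ ht₀ => (hf.2 t₀ ht₀).congr'
    (eventually_nhdsWithin_of_forall fun t ht => by rw [hfg ht, hfg ht₀])⟩

lemma mono (hab : ∀ x, N b x ≤ N a x) (hf : ScaleContOn N a T f) : ScaleContOn N b T f :=
  ⟨fun t ht => ne_top_of_le_ne_top (hf.1 t ht) (hab _), fun t₀ ht₀ =>
    tendsto_of_tendsto_of_tendsto_of_le_of_le tendsto_const_nhds (hf.2 t₀ ht₀)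
      (fun _ => bot_le) fun _ => hab _⟩

end ScaleContOn

variable [NormedSpace ℝ E]

namespace IsCompleteENorm

variable (hν : IsCompleteENorm ν)
include hν

lemma supEDist_comm : supEDist ν T f g = supEDist ν T g f :=
  biSup_congr fun _ _ => hν.map_sub_rev _ _

lemma supEDist_triangle : supEDist ν T f h ≤ supEDist ν T f g + supEDist ν T g h :=
  iSup₂_le fun _ ht => (hν.sub_le _ _ _).trans (add_le_add (le_supEDist ht) (le_supEDist ht))

lemma eqOn_of_supEDist_le {c : ℕ → ℝ≥0∞} (hc : Tendsto c atTop (𝓝 0))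
    (hfg : ∀ n, supEDist ν T f g ≤ c n) : EqOn f g (Icc 0 T) := fun _ ht =>
  hν.eq_of_sub_eq_zero (nonpos_iff_eq_zero.1 ((le_supEDist ht).trans (ge_of_tendsto' hc hfg)))

lemma tendsto_apply_of_tendsto_supEDist {f : ℕ → ℝ → E}
    (hfg : Tendsto (fun n => supEDist ν T (f n) g) atTop (𝓝 0)) {t : ℝ} (ht : t ∈ Icc 0 T) :
    Tendsto (fun n => f n t) atTop (𝓝 (g t)) := by
  refine tendsto_iff_edist_tendsto_0.2 (tendsto_of_tendsto_of_tendsto_of_le_of_le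
    tendsto_const_nhds hfg (fun _ => bot_le) fun n => ?_)
  rw [edist_eq_enorm_sub]
  exact (hν.enorm_le _).trans (le_supEDist ht)

lemma supEDist_eq_edist {Φ Ψ : C(Icc (0 : ℝ) T, hν.Space)} (hΦ : ∀ s, hν.incl (Φ s) = f s)
    (hΨ : ∀ s, hν.incl (Ψ s) = g s) : supEDist ν T f g = edist Φ Ψ := by
  rw [ContinuousMap.edist_eq_iSup, supEDist, iSup_subtype']
  simp [hν.edist_eq, hΦ, hΨ]

end IsCompleteENorm

namespace ScaleContOn

variable (hν : IsCompleteENorm (N a))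
include hν

lemma const {x : E} (hx : N a x ≠ ⊤) : ScaleContOn N a T fun _ => x :=
  ⟨fun _ _ => hx, fun _ _ => by simpa [hν.map_zero] using tendsto_const_nhds⟩

lemma of_continuousOn {ψ : ℝ → hν.Space} (hψ : ContinuousOn ψ (Icc 0 T))
    (hψf : ∀ t ∈ Icc (0 : ℝ) T, hν.incl (ψ t) = f t) : ScaleContOn N a T f := by
  refine ⟨fun t ht => hψf t ht ▸ hν.ne_top _, fun t₀ ht₀ => ?_⟩
  have := tendsto_iff_edist_tendsto_0.1 (hψ t₀ ht₀)
  simp only [hν.edist_eq] at this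
  exact this.congr' (eventually_nhdsWithin_of_forall fun t ht => by rw [hψf t ht, hψf t₀ ht₀])

variable (hf : ScaleContOn N a T f)

def toContinuousMap : C(Icc (0 : ℝ) T, hν.Space) where
  toFun s := hν.ofFinite (f s) (hf.1 s s.2)
  continuous_toFun := continuous_iff_continuousAt.2 fun s => by
    rw [ContinuousAt, tendsto_iff_edist_tendsto_0]
    simp only [hν.edist_eq, IsCompleteENorm.incl_ofFinite]
    exact (hf.2 s s.2).comp (tendsto_nhdsWithin_iff.2
      ⟨continuous_subtype_val.tendsto s, Eventually.of_forall fun t => t.2⟩)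

@[simp]
lemma incl_toContinuousMap (s : Icc (0 : ℝ) T) : hν.incl (hf.toContinuousMap hν s) = f s := rfl

def lift (hT : 0 ≤ T) : ℝ → hν.Space := IccExtend hT (hf.toContinuousMap hν)

lemma continuous_lift (hT : 0 ≤ T) : Continuous (hf.lift hν hT) :=
  (hf.toContinuousMap hν).continuous.Icc_extend'

lemma incl_lift (hT : 0 ≤ T) {t : ℝ} (ht : t ∈ Icc 0 T) : hν.incl (hf.lift hν hT t) = f t := by
  rw [lift, IccExtend_of_mem _ _ ht, incl_toContinuousMap]

include hf in
lemma supEDist_ne_top (hg : ScaleContOn N a T g) : supEDist (N a) T f g ≠ ⊤ := by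
  rw [hν.supEDist_eq_edist (hf.incl_toContinuousMap hν) (hg.incl_toContinuousMap hν)]
  exact edist_ne_top _ _

lemma exists_tendsto_supEDist (hT : 0 ≤ T) {f : ℕ → ℝ → E} (hf : ∀ n, ScaleContOn N a T (f n))
    (hsum : ∑' n, supEDist (N a) T (f n) (f (n + 1)) ≠ ⊤) :
    ∃ g, ScaleContOn N a T g ∧ Tendsto (fun n => supEDist (N a) T (f n) g) atTop (𝓝 0) := by
  have hΦ : CauchySeq fun n => (hf n).toContinuousMap hν :=
    cauchySeq_of_edist_le_of_tsum_ne_top _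
      (fun n => (hν.supEDist_eq_edist (by simp) (by simp)).ge) hsum
  obtain ⟨Ψ, hΨ⟩ := cauchySeq_tendsto_of_complete hΦ
  refine ⟨fun t => hν.incl (IccExtend hT Ψ t),
    of_continuousOn hν Ψ.continuous.Icc_extend'.continuousOn fun _ _ => rfl, ?_⟩
  have hdist : ∀ n, supEDist (N a) T (f n) (fun t => hν.incl (IccExtend hT Ψ t)) =
      edist ((hf n).toContinuousMap hν) Ψ :=
    fun n => hν.supEDist_eq_edist (by simp) (by simp [IccExtend_val])
  simpa only [hdist] using tendsto_iff_edist_tendsto_0.1 hΨ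

end ScaleContOn

end ScaleContOn

section Integral

variable {E : Type*} [NormedAddCommGroup E] [NormedSpace ℝ E] [CompleteSpace E]
  {N : ℝ → E → ℝ≥0∞} {a T : ℝ} {f g : ℝ → E}

lemma lintegral_Ioc_pow_div_factorial {t : ℝ} (ht : 0 ≤ t) (k : ℕ) :
    ∫⁻ s in Ioc 0 t, ENNReal.ofReal (s ^ k / k.factorial) =
      ENNReal.ofReal (t ^ (k + 1) / (k + 1).factorial) := by
  rw [← ofReal_integral_eq_lintegral_ofReal, ← intervalIntegral.integral_of_le ht,
    intervalIntegral.integral_div, integral_pow]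
  · congr 1
    rw [Nat.factorial_succ]
    push_cast
    field_simp
    ring
  · exact (by fun_prop : Continuous fun s : ℝ => s ^ k / k.factorial).integrableOn_Ioc
  · exact ae_restrict_of_forall_mem measurableSet_Ioc fun s hs => by have := hs.1; positivity

namespace ScaleContOn

variable (hν : IsCompleteENorm (N a)) (hT : 0 ≤ T)
include hν hT

lemma integral_eq_incl (hf : ScaleContOn N a T f) {t : ℝ} (ht : t ∈ Icc 0 T) :
    ∫ s in (0 : ℝ)..t, f s = hν.incl (∫ s in (0 : ℝ)..t, hf.lift hν hT s) := by
  rw [← hν.incl.intervalIntegral_comp_comm ((hf.continuous_lift hν hT).intervalIntegrable 0 t)]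
  exact intervalIntegral.integral_congr fun s hs =>
    (hf.incl_lift hν hT (uIcc_subset_Icc ⟨le_rfl, hT⟩ ht hs)).symm

lemma const_add_integral (hf : ScaleContOn N a T f) {x : E} (hx : N a x ≠ ⊤) :
    ScaleContOn N a T (fun t => x + ∫ s in (0 : ℝ)..t, f s) := by
  have hlift := hf.continuous_lift hν hT
  refine of_continuousOn hν
    (ψ := fun t => hν.ofFinite x hx + ∫ s in (0 : ℝ)..t, hf.lift hν hT s)
    (continuous_const.add (intervalIntegral.continuous_primitive
      (fun _ _ => hlift.intervalIntegrable _ _) 0)).continuousOn fun t ht => ?_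
  rw [map_add, IsCompleteENorm.incl_ofFinite, hf.integral_eq_incl hν hT ht]

lemma sub_integral_le_lintegral (hf : ScaleContOn N a T f) (hg : ScaleContOn N a T g) {t : ℝ}
    (ht : t ∈ Icc 0 T) :
    N a ((∫ s in (0 : ℝ)..t, f s) - ∫ s in (0 : ℝ)..t, g s) ≤
      ∫⁻ s in Ioc 0 t, N a (f s - g s) := by
  rw [hf.integral_eq_incl hν hT ht, hg.integral_eq_incl hν hT ht, ← map_sub,
    ← intervalIntegral.integral_sub ((hf.continuous_lift hν hT).intervalIntegrable 0 t)
      ((hg.continuous_lift hν hT).intervalIntegrable 0 t),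
    ← hν.enorm_eq, intervalIntegral.integral_of_le ht.1]
  refine (enorm_integral_le_lintegral_enorm _).trans_eq
    (setLIntegral_congr_fun measurableSet_Ioc fun s hs => ?_)
  have hsT : s ∈ Icc 0 T := ⟨hs.1.le, hs.2.trans ht.2⟩
  rw [hν.enorm_eq, map_sub, hf.incl_lift hν hT hsT, hg.incl_lift hν hT hsT]

end ScaleContOn

end Integral

section Bound

lemma summable_mul_rpow_pow_div_factorial (C : ℝ) {q : ℝ} (hq : q < 1) :
    Summable fun n : ℕ => (C * (n : ℝ) ^ q) ^ n / n.factorial := by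
  have hr : Tendsto (fun n : ℕ => |C| * Real.exp 1 * (n : ℝ) ^ (q - 1)) atTop (𝓝 0) := by
    have := (tendsto_rpow_neg_atTop (by linarith : 0 < 1 - q)).comp tendsto_natCast_atTop_atTop
    simpa [neg_sub] using this.const_mul (|C| * Real.exp 1)
  refine summable_geometric_two.of_norm_bounded_eventually_nat ?_
  filter_upwards [hr.eventually (ge_mem_nhds (by norm_num : (0 : ℝ) < 1 / 2)),
    eventually_gt_atTop 0] with n hn hn0
  have hn0' : (0 : ℝ) < n := by exact_mod_cast hn0
  calc ‖(C * (n : ℝ) ^ q) ^ n / (n.factorial : ℝ)‖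
      = (|C| * (n : ℝ) ^ (q - 1)) ^ n * ((n : ℝ) ^ n / n.factorial) := by
        rw [Real.norm_eq_abs, abs_div, abs_pow, abs_mul, abs_of_pos (Real.rpow_pos_of_pos hn0' q),
          Nat.abs_cast, Real.rpow_sub_one hn0'.ne', ← mul_div_assoc, ← mul_pow]
        field_simp
    _ ≤ (|C| * (n : ℝ) ^ (q - 1)) ^ n * Real.exp n := by
        gcongr
        exact Real.pow_div_factorial_le_exp _ hn0'.le n
    _ = (|C| * Real.exp 1 * (n : ℝ) ^ (q - 1)) ^ n := by rw [← Real.exp_one_pow]; ring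
    _ ≤ (1 / 2) ^ n := by gcongr

variable {q L T d : ℝ}

/-- The factor by which `n` iterations of `ℐ` enlarge sup-distances when climbing a gap `d` of
the scale in `n` steps of size `d / n`. -/
def ovsjannikovBound (q L T d : ℝ) (n : ℕ) : ℝ≥0∞ :=
  ENNReal.ofReal (L / (d / n) ^ q) ^ n * ENNReal.ofReal (T ^ n / n.factorial)

lemma tsum_ovsjannikovBound_ne_top (hq : q < 1) (hd : 0 ≤ d) :
    ∑' n, ovsjannikovBound q L T d n ≠ ⊤ := by
  refine ne_top_of_le_ne_top
    (summable_mul_rpow_pow_div_factorial (L * T / d ^ q) hq).norm.tsum_ofReal_ne_top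
    (ENNReal.tsum_le_tsum fun n => ?_)
  calc ovsjannikovBound q L T d n
      ≤ ENNReal.ofReal |L / (d / n) ^ q| ^ n * ENNReal.ofReal |T ^ n / n.factorial| := by
        unfold ovsjannikovBound
        gcongr <;> exact le_abs_self _
    _ = ENNReal.ofReal ‖(L * T / d ^ q * (n : ℝ) ^ q) ^ n / (n.factorial : ℝ)‖ := by
        rw [← ofReal_pow (abs_nonneg _), ← ofReal_mul (by positivity), ← abs_pow, ← abs_mul,
          ← Real.norm_eq_abs, Real.div_rpow hd n.cast_nonneg, div_div_eq_mul_div]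
        congr 2
        ring

lemma tendsto_ovsjannikovBound_mul (hq : q < 1) (hd : 0 ≤ d) {D : ℝ≥0∞} (hD : D ≠ ⊤) :
    Tendsto (fun n => ovsjannikovBound q L T d n * D) atTop (𝓝 0) := by
  simpa using ENNReal.Tendsto.mul_const
    (ENNReal.tendsto_atTop_zero_of_tsum_ne_top (tsum_ovsjannikovBound_ne_top hq hd)) (Or.inr hD)

end Bound

section Ovsjannikov

variable {E : Type*} [NormedAddCommGroup E]

structure IsOvsjannikov (N : ℝ → E → ℝ≥0∞) (amin amax q L : ℝ) (F : E → E) : Prop where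
  mapsTo : ∀ a b, amin ≤ a → a < b → b ≤ amax → ∀ x, N a x ≠ ⊤ → N b (F x) ≠ ⊤
  lipschitz : ∀ a b, amin ≤ a → a < b → b ≤ amax → ∀ x y, N a x ≠ ⊤ → N a y ≠ ⊤ →
    N b (F x - F y) ≤ ENNReal.ofReal (L / (b - a) ^ q) * N a (x - y)

variable {N : ℝ → E → ℝ≥0∞} {amin amax q L T a b : ℝ} {F : E → E} {x₀ : E} {f u v : ℝ → E}

lemma ScaleContOn.comp_ovsjannikov (hF : IsOvsjannikov N amin amax q L F) (ha : amin ≤ a)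
    (hab : a < b) (hb : b ≤ amax) (hf : ScaleContOn N a T f) :
    ScaleContOn N b T (fun t => F (f t)) := by
  refine ⟨fun t ht => hF.mapsTo a b ha hab hb _ (hf.1 t ht), fun t₀ ht₀ => ?_⟩
  have hlim := ENNReal.Tendsto.const_mul (hf.2 t₀ ht₀)
    (Or.inr ofReal_ne_top : (0 : ℝ≥0∞) ≠ 0 ∨ ENNReal.ofReal (L / (b - a) ^ q) ≠ ⊤)
  rw [mul_zero] at hlim
  exact tendsto_of_tendsto_of_tendsto_of_le_of_le' tendsto_const_nhds hlim
    (Eventually.of_forall fun _ => bot_le) (eventually_nhdsWithin_of_forall fun t ht =>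
      hF.lipschitz a b ha hab hb _ _ (hf.1 t ht) (hf.1 t₀ ht₀))

variable [NormedSpace ℝ E]

structure IsScale (N : ℝ → E → ℝ≥0∞) (amin amax : ℝ) : Prop where
  isCompleteENorm : ∀ a, amin ≤ a → a ≤ amax → IsCompleteENorm (N a)
  antitone : ∀ a b, amin ≤ a → a ≤ b → b ≤ amax → ∀ x, N b x ≤ N a x

variable [CompleteSpace E]

lemma imap_eqOn_imap_of_eqOn (huv : EqOn u v (Icc 0 T)) :
    EqOn (Imap F x₀ u) (Imap F x₀ v) (Icc 0 T) := fun t ht => by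
  refine congrArg (x₀ + ·) (intervalIntegral.integral_congr fun s hs => ?_)
  simp only [huv (uIcc_subset_Icc ⟨le_rfl, ht.1.trans ht.2⟩ ht hs)]

lemma iterate_imap_eqOn_self (hu : EqOn (Imap F x₀ u) u (Icc 0 T)) (n : ℕ) :
    EqOn ((Imap F x₀)^[n] u) u (Icc 0 T) := by
  induction n with
  | zero => exact fun _ _ => rfl
  | succ n ih =>
    rw [Function.iterate_succ']
    exact (imap_eqOn_imap_of_eqOn ih).trans hu

variable (hN : IsScale N amin amax) (hF : IsOvsjannikov N amin amax q L F) (hT : 0 ≤ T)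
include hN hF hT

lemma ScaleContOn.imap (ha : amin ≤ a) (hab : a < b) (hb : b ≤ amax) (hx₀ : N b x₀ ≠ ⊤)
    (hf : ScaleContOn N a T f) : ScaleContOn N b T (Imap F x₀ f) :=
  (hf.comp_ovsjannikov hF ha hab hb).const_add_integral
    (hN.isCompleteENorm b (ha.trans hab.le) hb) hT hx₀

lemma ScaleContOn.iterate_imap (ha : amin ≤ a) (hab : a < b) (hb : b ≤ amax)
    (hx₀ : N a x₀ ≠ ⊤) (hf : ScaleContOn N a T f) (n : ℕ) :
    ScaleContOn N b T ((Imap F x₀)^[n] f) := by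
  induction n generalizing b with
  | zero => exact hf.mono (hN.antitone a b ha hab.le hb)
  | succ n ih =>
    rw [Function.iterate_succ_apply']
    exact (ih (b := (a + b) / 2) (by linarith) (by linarith)).imap hN hF hT (by linarith)
      (by linarith) hb (ne_top_of_le_ne_top hx₀ (hN.antitone a b ha hab.le hb x₀))

lemma imap_sub_le (ha : amin ≤ a) (hab : a < b) (hb : b ≤ amax) (hu : ScaleContOn N a T u)
    (hv : ScaleContOn N a T v) {C : ℝ≥0∞} {k : ℕ}
    (huv : ∀ s ∈ Icc 0 T, N a (u s - v s) ≤ C * ENNReal.ofReal (s ^ k / k.factorial))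
    {t : ℝ} (ht : t ∈ Icc 0 T) :
    N b (Imap F x₀ u t - Imap F x₀ v t) ≤
      ENNReal.ofReal (L / (b - a) ^ q) * C *
        ENNReal.ofReal (t ^ (k + 1) / (k + 1).factorial) := by
  calc N b (Imap F x₀ u t - Imap F x₀ v t)
      = N b ((∫ s in (0 : ℝ)..t, F (u s)) - ∫ s in (0 : ℝ)..t, F (v s)) := by
        rw [Imap, Imap, add_sub_add_left_eq_sub]
    _ ≤ ∫⁻ s in Ioc 0 t, N b (F (u s) - F (v s)) :=
        (hu.comp_ovsjannikov hF ha hab hb).sub_integral_le_lintegral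
          (hN.isCompleteENorm b (ha.trans hab.le) hb) hT (hv.comp_ovsjannikov hF ha hab hb) ht
    _ ≤ ∫⁻ s in Ioc 0 t,
          ENNReal.ofReal (L / (b - a) ^ q) * C * ENNReal.ofReal (s ^ k / k.factorial) := by
        refine setLIntegral_mono' measurableSet_Ioc fun s hs => ?_
        have hsT : s ∈ Icc 0 T := ⟨hs.1.le, hs.2.trans ht.2⟩
        rw [mul_assoc]
        exact (hF.lipschitz a b ha hab hb _ _ (hu.1 s hsT) (hv.1 s hsT)).trans
          (by gcongr; exact huv s hsT)
    _ = _ := by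
        rw [lintegral_const_mul _ (by fun_prop), lintegral_Ioc_pow_div_factorial ht.1]

lemma iterate_imap_sub_le {δ : ℝ} (hδ : 0 < δ) (i : ℕ) {C : ℝ≥0∞} {k : ℕ}
    (ha : amin ≤ a) (hi : a + i * δ ≤ amax) (hx₀ : N a x₀ ≠ ⊤)
    (hu : ScaleContOn N a T u) (hv : ScaleContOn N a T v)
    (huv : ∀ s ∈ Icc 0 T, N a (u s - v s) ≤ C * ENNReal.ofReal (s ^ k / k.factorial))
    {t : ℝ} (ht : t ∈ Icc 0 T) :
    N (a + i * δ) ((Imap F x₀)^[i] u t - (Imap F x₀)^[i] v t) ≤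
      ENNReal.ofReal (L / δ ^ q) ^ i * C *
        ENNReal.ofReal (t ^ (k + i) / (k + i).factorial) := by
  induction i generalizing a u v C k with
  | zero => simpa using huv t ht
  | succ i ih =>
    have hiδ : (0 : ℝ) ≤ i * δ := by positivity
    push_cast at hi
    have hab : a < a + δ := by linarith
    have hb : a + δ ≤ amax := by linarith
    have hx₀' : N (a + δ) x₀ ≠ ⊤ := ne_top_of_le_ne_top hx₀ (hN.antitone _ _ ha hab.le hb x₀)
    have hstep := fun s (hs : s ∈ Icc 0 T) => imap_sub_le hN hF hT (x₀ := x₀) ha hab hb hu hv huv hs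
    rw [add_sub_cancel_left] at hstep
    have h := ih (by linarith) (by linarith) hx₀' (hu.imap hN hF hT ha hab hb hx₀')
      (hv.imap hN hF hT ha hab hb hx₀') hstep
    rw [Function.iterate_succ_apply, Function.iterate_succ_apply,
      show a + ((i + 1 : ℕ) : ℝ) * δ = a + δ + i * δ by push_cast; ring,
      show k + (i + 1) = k + 1 + i by omega, pow_succ, mul_assoc _ (ENNReal.ofReal _) C]
    exact h

lemma supEDist_iterate_imap_le (ha : amin ≤ a) (hab : a < b) (hb : b ≤ amax)
    (hx₀ : N a x₀ ≠ ⊤) (hu : ScaleContOn N a T u) (hv : ScaleContOn N a T v) (n : ℕ) :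
    supEDist (N b) T ((Imap F x₀)^[n] u) ((Imap F x₀)^[n] v) ≤
      ovsjannikovBound q L T (b - a) n * supEDist (N a) T u v := by
  rcases n.eq_zero_or_pos with rfl | hn
  · simpa [ovsjannikovBound] using supEDist_mono (hN.antitone a b ha hab.le hb)
  have hn' : (0 : ℝ) < n := by exact_mod_cast hn
  have hlevel : a + n * ((b - a) / n) = b := by field_simp; ring
  refine iSup₂_le fun t ht => ?_
  have h := iterate_imap_sub_le hN hF hT (div_pos (sub_pos.2 hab) hn') n ha (hlevel.symm ▸ hb)
    hx₀ hu hv (k := 0) (fun s hs => by simpa using le_supEDist hs) ht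
  rw [hlevel, zero_add] at h
  refine h.trans ?_
  rw [ovsjannikovBound, mul_right_comm]
  gcongr
  exacts [ht.1, ht.2]

end Ovsjannikov

section Picard

variable {E : Type*} [NormedAddCommGroup E] [NormedSpace ℝ E] [CompleteSpace E]
  {N : ℝ → E → ℝ≥0∞} {amin amax q L T a b : ℝ} {F : E → E} {x₀ : E}
  (hN : IsScale N amin amax) (hF : IsOvsjannikov N amin amax q L F) (hT : 0 ≤ T)
include hN hF hT

lemma imap_eqOn_self_of_tendsto_picard (hlt : amin < amax) (hx₀ : N amin x₀ ≠ ⊤) {φ : ℝ → E}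
    (hφ : ∀ a, amin < a → a < amax → ScaleContOn N a T φ ∧
      Tendsto (fun n => supEDist (N a) T ((Imap F x₀)^[n] fun _ => x₀) φ) atTop (𝓝 0)) :
    EqOn (Imap F x₀ φ) φ (Icc 0 T) := by
  set p : ℕ → ℝ → E := fun n => (Imap F x₀)^[n] fun _ => x₀
  obtain ⟨a', a, ha', haa, ha⟩ : ∃ a' a, amin < a' ∧ a' < a ∧ a < amax :=
    ⟨(3 * amin + amax) / 4, (amin + amax) / 2, by linarith, by linarith, by linarith⟩
  have hν := hN.isCompleteENorm a (by linarith) ha.le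
  obtain ⟨hφa', hpa'⟩ := hφ a' ha' (by linarith)
  have hp := (ScaleContOn.const (T := T) (hN.isCompleteENorm amin le_rfl hlt.le) hx₀).iterate_imap
    hN hF hT le_rfl ha' (by linarith) hx₀
  have hstep : ∀ n, supEDist (N a) T (Imap F x₀ φ) (p (n + 1)) ≤
      ovsjannikovBound q L T (a - a') 1 * supEDist (N a') T (p n) φ := fun n => by
    rw [(hN.isCompleteENorm a' ha'.le (by linarith)).supEDist_comm,
      show p (n + 1) = Imap F x₀ (p n) from Function.iterate_succ_apply' _ _ _]
    exact supEDist_iterate_imap_le hN hF hT ha'.le haa ha.le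
      (ne_top_of_le_ne_top hx₀ (hN.antitone _ _ le_rfl ha'.le (by linarith) x₀)) hφa' (hp n) 1
  refine hν.eqOn_of_supEDist_le (c := fun n => ovsjannikovBound q L T (a - a') 1 *
    supEDist (N a') T (p n) φ + supEDist (N a) T (p (n + 1)) φ) ?_
    fun n => hν.supEDist_triangle.trans (add_le_add (hstep n) le_rfl)
  have hbound : ovsjannikovBound q L T (a - a') 1 ≠ ⊤ := by
    simp [ovsjannikovBound, ENNReal.mul_ne_top]
  have hlim := (ENNReal.Tendsto.const_mul hpa' (Or.inr hbound)).add
    ((hφ a (by linarith) ha).2.comp (tendsto_add_atTop_nat 1))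
  rwa [mul_zero, add_zero] at hlim

variable (hq : q < 1)
include hq

lemma tendsto_supEDist_iterate_imap {u v : ℝ → E} (ha : amin ≤ a) (hab : a < b) (hb : b ≤ amax)
    (hx₀ : N a x₀ ≠ ⊤) (hu : ScaleContOn N a T u) (hv : ScaleContOn N a T v) :
    Tendsto (fun n => supEDist (N b) T ((Imap F x₀)^[n] u) ((Imap F x₀)^[n] v)) atTop (𝓝 0) :=
  tendsto_of_tendsto_of_tendsto_of_le_of_le tendsto_const_nhds
    (tendsto_ovsjannikovBound_mul hq (sub_nonneg.2 hab.le)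
      (hu.supEDist_ne_top (hN.isCompleteENorm a ha (hab.le.trans hb)) hv))
    (fun _ => bot_le) (supEDist_iterate_imap_le hN hF hT ha hab hb hx₀ hu hv)

lemma exists_tendsto_supEDist_picard (hx₀ : N amin x₀ ≠ ⊤) :
    ∃ φ : ℝ → E, ∀ a, amin < a → a < amax → ScaleContOn N a T φ ∧
      Tendsto (fun n => supEDist (N a) T ((Imap F x₀)^[n] fun _ => x₀) φ) atTop (𝓝 0) := by
  set p : ℕ → ℝ → E := fun n => (Imap F x₀)^[n] fun _ => x₀
  -- The limit is taken in `E`, so that it is the same function at every level.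
  refine ⟨fun t => limUnder atTop fun n => p n t, fun a ha ha' => ?_⟩
  have hν := hN.isCompleteENorm a ha.le ha'.le
  have hp₀ := ScaleContOn.const (T := T) (hN.isCompleteENorm amin le_rfl (by linarith)) hx₀
  obtain ⟨a', ha'₁, ha'₂⟩ : ∃ a', amin < a' ∧ a' < a := ⟨(amin + a) / 2, by linarith, by linarith⟩
  have hν' := hN.isCompleteENorm a' ha'₁.le (by linarith)
  have hp := hp₀.iterate_imap hN hF hT le_rfl ha'₁ (by linarith) hx₀
  have hstep : ∀ n, supEDist (N a) T (p n) (p (n + 1)) ≤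
      ovsjannikovBound q L T (a - a') n * supEDist (N a') T (p 0) (p 1) :=
    supEDist_iterate_imap_le hN hF hT ha'₁.le ha'₂ ha'.le
      (ne_top_of_le_ne_top hx₀ (hN.antitone _ _ le_rfl ha'₁.le (by linarith) x₀)) (hp 0) (hp 1)
  obtain ⟨g, hg, hpg⟩ := ScaleContOn.exists_tendsto_supEDist hν hT
    (hp₀.iterate_imap hN hF hT le_rfl ha ha'.le hx₀)
    (ne_top_of_le_ne_top (ENNReal.mul_ne_top (tsum_ovsjannikovBound_ne_top hq (by linarith))
      ((hp 0).supEDist_ne_top hν' (hp 1)))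
      ((ENNReal.tsum_le_tsum hstep).trans_eq ENNReal.tsum_mul_right))
  have hgφ : EqOn g (fun t => limUnder atTop fun n => p n t) (Icc 0 T) := fun t ht =>
    ((hν.tendsto_apply_of_tendsto_supEDist hpg ht).limUnder_eq).symm
  exact ⟨hg.congr hgφ, by simpa only [supEDist_congr (eqOn_refl _ _) hgφ] using hpg⟩

lemma eqOn_of_imap_eqOn_self (hlt : amin < amax) (hx₀ : N amin x₀ ≠ ⊤) {φ ψ : ℝ → E}
    (hφ : ∀ a, amin < a → a < amax → ScaleContOn N a T φ)
    (hψ : ∀ a, amin < a → a < amax → ScaleContOn N a T ψ)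
    (hφfix : EqOn (Imap F x₀ φ) φ (Icc 0 T)) (hψfix : EqOn (Imap F x₀ ψ) ψ (Icc 0 T)) :
    EqOn ψ φ (Icc 0 T) := by
  obtain ⟨a', a, ha', haa, ha⟩ : ∃ a' a, amin < a' ∧ a' < a ∧ a < amax :=
    ⟨(3 * amin + amax) / 4, (amin + amax) / 2, by linarith, by linarith, by linarith⟩
  refine (hN.isCompleteENorm a (by linarith) ha.le).eqOn_of_supEDist_le
    (tendsto_supEDist_iterate_imap hN hF hT hq ha'.le haa ha.le
      (ne_top_of_le_ne_top hx₀ (hN.antitone _ _ le_rfl ha'.le (by linarith) x₀))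
      (hψ a' ha' (by linarith)) (hφ a' ha' (by linarith))) fun n => ?_
  exact (supEDist_congr (iterate_imap_eqOn_self hψfix n) (iterate_imap_eqOn_self hφfix n)).ge

lemma tendsto_supEDist_iterate_imap_of_tendsto_picard (ha : amin < a) (ha' : a < amax)
    (hx₀ : N amin x₀ ≠ ⊤) {φ f : ℝ → E} (hf : ScaleContOn N amin T f)
    (hφ : Tendsto (fun n => supEDist (N a) T ((Imap F x₀)^[n] fun _ => x₀) φ) atTop (𝓝 0)) :
    Tendsto (fun n => supEDist (N a) T ((Imap F x₀)^[n] f) φ) atTop (𝓝 0) := by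
  have hlim := (tendsto_supEDist_iterate_imap hN hF hT hq le_rfl ha ha'.le hx₀ hf
    (ScaleContOn.const (hN.isCompleteENorm amin le_rfl (ha.trans ha').le) hx₀)).add hφ
  rw [add_zero] at hlim
  exact tendsto_of_tendsto_of_tendsto_of_le_of_le tendsto_const_nhds hlim (fun _ => bot_le)
    fun _ => (hN.isCompleteENorm a ha.le ha'.le).supEDist_triangle

end Picard

theorem statement13_general
    -- the scale of Banach spaces, realised inside the ambient space `E = X_{amax}`
    (E : Type*) [NormedAddCommGroup E] [NormedSpace ℝ E] [CompleteSpace E]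
    (amin amax : ℝ) (hminmax : amin < amax)
    (N : ℝ → E → ℝ≥0∞)
    (htop : ∀ x : E, N amax x = (‖x‖₊ : ℝ≥0∞))
    (hmono : ∀ a b : ℝ, amin ≤ a → a ≤ b → b ≤ amax → ∀ x : E, N b x ≤ N a x)
    (hadd : ∀ a : ℝ, amin ≤ a → a ≤ amax → ∀ x y : E, N a (x + y) ≤ N a x + N a y)
    (hsmul : ∀ a : ℝ, amin ≤ a → a ≤ amax → ∀ (c : ℝ) (x : E),
      N a (c • x) = (‖c‖₊ : ℝ≥0∞) * N a x)
    (hcomplete : ∀ a : ℝ, amin ≤ a → a ≤ amax → ∀ u : ℕ → E,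
      (∀ n, N a (u n) ≠ ⊤) →
      (∀ ε : ℝ≥0∞, 0 < ε → ∃ K : ℕ, ∀ m ≥ K, ∀ n ≥ K, N a (u m - u n) < ε) →
      ∃ x : E, N a x ≠ ⊤ ∧ Tendsto (fun n => N a (u n - x)) atTop (nhds 0))
    -- the Ovsjannikov map `F` of order `q` and constant `L`
    (q L : ℝ) (F : E → E)
    (hFmap : ∀ a b : ℝ, amin ≤ a → a < b → b ≤ amax → ∀ x : E,
      N a x ≠ ⊤ → N b (F x) ≠ ⊤)
    (hFlip : ∀ a b : ℝ, amin ≤ a → a < b → b ≤ amax → ∀ x y : E,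
      N a x ≠ ⊤ → N a y ≠ ⊤ →
      N b (F x - F y) ≤ ENNReal.ofReal (L / (b - a) ^ q) * N a (x - y))
    (T : ℝ) (hT : 0 < T) (x₀ : E) (hx₀ : N amin x₀ ≠ ⊤)
    (hq1 : q < 1) :
    ∃ φ : ℝ → E,
      (∀ a : ℝ, amin < a → a < amax → ScaleContOn N a T φ) ∧
      (∀ t ∈ Icc (0 : ℝ) T, Imap F x₀ φ t = φ t) ∧
      (∀ ψ : ℝ → E, (∀ a : ℝ, amin < a → a < amax → ScaleContOn N a T ψ) →
        (∀ t ∈ Icc (0 : ℝ) T, Imap F x₀ ψ t = ψ t) →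
        ∀ t ∈ Icc (0 : ℝ) T, ψ t = φ t) ∧
      (∀ a : ℝ, amin < a → a < amax → ∀ f : ℝ → E, ScaleContOn N amin T f →
        Tendsto (fun n : ℕ => ⨆ t ∈ Icc (0 : ℝ) T, N a ((Imap F x₀)^[n] f t - φ t))
          atTop (nhds 0)) := by
  have hN : IsScale N amin amax :=
    ⟨fun a ha ha' => ⟨hadd a ha ha', hsmul a ha ha',
      fun x => (htop x).symm.trans_le (hmono a amax ha ha' le_rfl x), hcomplete a ha ha'⟩, hmono⟩
  have hF : IsOvsjannikov N amin amax q L F := ⟨hFmap, hFlip⟩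
  obtain ⟨φ, hφ⟩ := exists_tendsto_supEDist_picard hN hF hT.le hq1 hx₀
  have hfix := imap_eqOn_self_of_tendsto_picard hN hF hT.le hminmax hx₀ hφ
  exact ⟨φ, fun a ha ha' => (hφ a ha ha').1, hfix,
    fun ψ hψ hψfix => eqOn_of_imap_eqOn_self hN hF hT.le hq1 hminmax hx₀
      (fun a ha ha' => (hφ a ha ha').1) hψ hfix hψfix,
    fun a ha ha' f hf => tendsto_supEDist_iterate_imap_of_tendsto_picard hN hF hT.le hq1 ha ha'
      hx₀ hf (hφ a ha ha').2⟩

theorem statement13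
    -- the scale of Banach spaces, realised inside the ambient space `E = X_{amax}`
    (E : Type*) [NormedAddCommGroup E] [NormedSpace ℝ E] [CompleteSpace E]
    (amin amax : ℝ) (hamin : 0 < amin) (hminmax : amin < amax)
    (N : ℝ → E → ℝ≥0∞)
    (htop : ∀ x : E, N amax x = (‖x‖₊ : ℝ≥0∞))
    (hmono : ∀ a b : ℝ, amin ≤ a → a ≤ b → b ≤ amax → ∀ x : E, N b x ≤ N a x)
    (hzero : ∀ a : ℝ, amin ≤ a → a ≤ amax → N a 0 = 0)
    (hadd : ∀ a : ℝ, amin ≤ a → a ≤ amax → ∀ x y : E, N a (x + y) ≤ N a x + N a y)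
    (hsmul : ∀ a : ℝ, amin ≤ a → a ≤ amax → ∀ (c : ℝ) (x : E),
      N a (c • x) = (‖c‖₊ : ℝ≥0∞) * N a x)
    (hcomplete : ∀ a : ℝ, amin ≤ a → a ≤ amax → ∀ u : ℕ → E,
      (∀ n, N a (u n) ≠ ⊤) →
      (∀ ε : ℝ≥0∞, 0 < ε → ∃ K : ℕ, ∀ m ≥ K, ∀ n ≥ K, N a (u m - u n) < ε) →
      ∃ x : E, N a x ≠ ⊤ ∧ Tendsto (fun n => N a (u n - x)) atTop (nhds 0))
    -- the Ovsjannikov map `F` of order `q` and constant `L`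
    (q L : ℝ) (hq : 0 ≤ q) (hL : 0 < L) (F : E → E)
    (hFmap : ∀ a b : ℝ, amin ≤ a → a < b → b ≤ amax → ∀ x : E,
      N a x ≠ ⊤ → N b (F x) ≠ ⊤)
    (hFlip : ∀ a b : ℝ, amin ≤ a → a < b → b ≤ amax → ∀ x y : E,
      N a x ≠ ⊤ → N a y ≠ ⊤ →
      N b (F x - F y) ≤ ENNReal.ofReal (L / (b - a) ^ q) * N a (x - y))
    (T : ℝ) (hT : 0 < T) (x₀ : E) (hx₀ : N amin x₀ ≠ ⊤)
    (hq1 : q < 1) :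
    ∃ φ : ℝ → E,
      (∀ a : ℝ, amin < a → a < amax → ScaleContOn N a T φ) ∧
      (∀ t ∈ Icc (0 : ℝ) T, Imap F x₀ φ t = φ t) ∧
      (∀ ψ : ℝ → E, (∀ a : ℝ, amin < a → a < amax → ScaleContOn N a T ψ) →
        (∀ t ∈ Icc (0 : ℝ) T, Imap F x₀ ψ t = ψ t) →
        ∀ t ∈ Icc (0 : ℝ) T, ψ t = φ t) ∧
      (∀ a : ℝ, amin < a → a < amax → ∀ f : ℝ → E, ScaleContOn N amin T f →
        Tendsto (fun n : ℕ => ⨆ t ∈ Icc (0 : ℝ) T, N a ((Imap F x₀)^[n] f t - φ t))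
          atTop (nhds 0)) :=
  statement13_general E amin amax hminmax N htop hmono hadd hsmul hcomplete q L F hFmap hFlip T hT
    x₀ hx₀ hq1
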